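/- Let A be an m-dimensional permutation array of even order n defined by a bijection φ : [n_1]×⋯×[n_k] → [n_{k+1}]×⋯×[n_m], and let E be a nonempty subset of [m] with n_i even for all i ∈ E, such that E ⊆ {1,...,k} or E ⊆ {k+1,...,m}. Let 𝓗_E be the multiset of toroidal vectors (h_1,...,h_m) of A with h_i = n_i/2 for all i ∈ E. Then |𝓗_E| · ∏_{i∈E} n_i = n². -/

import Mathlib

open scoped Classical

/-- The half-length element `q/2` of `ℤ_q`. -/
def halfElt (q : ℕ) : ZMod q := ((q / 2 : ℕ) : ZMod q)

/-!
Fix a dot `α`. For `i ∈ E` the condition `h_i = n_i / 2` determines the `i`-th coordinate of `ω`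
uniquely, and the remaining coordinates of the block containing `E` are free, so `α` has exactly
`∏_{i ∉ E} n_i` partners; as `n_i / 2 ≠ 0` in `ℤ_{n_i}`, none of them is `α` itself. Summing over
the `n = ∏ n_i` dots gives `|𝓗_E| · ∏_{i ∈ E} n_i = n²`. When `E` lies in the second block, `φ`
transports the count there.
-/

open Finset

section PiCount

variable {ι : Type*} [Fintype ι] {β : ι → Type*} [∀ i, Fintype (β i)]

theorem card_filter_forall_mem_rel_mul_prod (S : Finset ι) (R : ∀ i, β i → β i → Prop)
    (hR : ∀ i ∈ S, ∀ x, ∃! y, R i x y) (x : ∀ i, β i) :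
    #{y : ∀ i, β i | ∀ i ∈ S, R i (x i) (y i)} * ∏ i ∈ S, Fintype.card (β i) =
      Fintype.card (∀ i, β i) := by
  have hfiber : ({y : ∀ i, β i | ∀ i ∈ S, R i (x i) (y i)} : Finset _) =
      Fintype.piFinset fun i => if i ∈ S then ({y | R i (x i) y} : Finset (β i)) else univ := by
    ext y
    simp only [mem_filter, mem_univ, true_and, Fintype.mem_piFinset]
    refine forall_congr' fun i => ?_
    split_ifs with hi <;> simp [hi]
  rw [hfiber, Fintype.card_piFinset, Fintype.card_pi, ← Fintype.prod_ite_mem S,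
    ← prod_mul_distrib]
  refine prod_congr rfl fun i _ => ?_
  split_ifs with hi
  · rw [card_eq_one.mpr ?_, one_mul]
    obtain ⟨y, hy, huniq⟩ := hR i hi (x i)
    exact ⟨y, by ext z; simpa using ⟨huniq z, fun h => h ▸ hy⟩⟩
  · simp

theorem card_filter_pairs_forall_mem_rel_mul_prod (S : Finset ι) (R : ∀ i, β i → β i → Prop)
    (hR : ∀ i ∈ S, ∀ x, ∃! y, R i x y) :
    #{p : (∀ i, β i) × (∀ i, β i) | ∀ i ∈ S, R i (p.1 i) (p.2 i)} * ∏ i ∈ S, Fintype.card (β i) =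
      Fintype.card (∀ i, β i) ^ 2 := by
  rw [card_filter, Fintype.sum_prod_type, sum_mul]
  simp only [← card_filter, card_filter_forall_mem_rel_mul_prod S R hR, sum_const, card_univ,
    smul_eq_mul, sq]

end PiCount

theorem card_filter_prod_map_equiv {α β : Type*} [Fintype α] [Fintype β] (e : α ≃ β)
    (P : β × β → Prop) : #{p : α × α | P (e p.1, e p.2)} = #{q : β × β | P q} :=
  card_equiv (e.prodCongr e) (by simp)

theorem existsUnique_intCast_sub_eq {q : ℕ} (x : Fin q) (c : ZMod q) :
    ∃! y : Fin q, (((y : ℤ) - (x : ℤ)) : ZMod q) = c := by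
  have : NeZero q := ⟨x.pos.ne'⟩
  refine ⟨⟨(x + c : ZMod q).val, ZMod.val_lt _⟩, ?_, fun y hy => ?_⟩
  · simp
  · push_cast at hy
    rw [sub_eq_iff_eq_add'] at hy
    ext
    simp only [← hy, ZMod.val_cast_of_lt y.isLt]

theorem halfElt_ne_zero {q : ℕ} (hq : 2 ≤ q) : halfElt q ≠ 0 := by
  intro h
  have hval := congrArg ZMod.val h
  rw [halfElt, ZMod.val_cast_of_lt (by omega), ZMod.val_zero] at hval
  omega

theorem card_filter_ne_and_sub_eq_mul_prod {ι : Type*} [Fintype ι] (n : ι → ℕ) (S : Finset ι)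
    (hS : S.Nonempty) (c : ∀ i, ZMod (n i)) (hc : ∀ i ∈ S, c i ≠ 0) :
    #{p : (∀ i, Fin (n i)) × (∀ i, Fin (n i)) |
        p.1 ≠ p.2 ∧ ∀ i ∈ S, (((p.2 i : ℤ) - (p.1 i : ℤ)) : ZMod (n i)) = c i} * ∏ i ∈ S, n i =
      (∏ i, n i) ^ 2 := by
  have hne (p : (∀ i, Fin (n i)) × (∀ i, Fin (n i)))
      (hp : ∀ i ∈ S, (((p.2 i : ℤ) - (p.1 i : ℤ)) : ZMod (n i)) = c i) : p.1 ≠ p.2 := by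
    intro heq
    obtain ⟨i, hi⟩ := hS
    exact hc i hi (by simpa [heq] using (hp i hi).symm)
  simp_rw [and_iff_right_of_imp (hne _)]
  simpa using card_filter_pairs_forall_mem_rel_mul_prod S
    (fun i (x y : Fin (n i)) => (((y : ℤ) - (x : ℤ)) : ZMod (n i)) = c i)
    (fun i _ x => existsUnique_intCast_sub_eq x (c i))

theorem counting_lemma (k l : ℕ) (n₁ : Fin k → ℕ) (n₂ : Fin l → ℕ) (N : ℕ)
    (hn₁ : ∀ i, 2 ≤ n₁ i) (hn₂ : ∀ j, 2 ≤ n₂ j)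
    (h₁ : ∏ i, n₁ i = N) (h₂ : ∏ j, n₂ j = N)
    (φ : ((i : Fin k) → Fin (n₁ i)) ≃ ((j : Fin l) → Fin (n₂ j)))
    (E : Finset (Fin k ⊕ Fin l)) (hE : E.Nonempty)
    (hEblock : (∀ i ∈ E, ∃ a, i = Sum.inl a) ∨ (∀ i ∈ E, ∃ b, i = Sum.inr b)) :
    ((Finset.univ.filter
        (fun p : ((i : Fin k) → Fin (n₁ i)) × ((i : Fin k) → Fin (n₁ i)) =>
          p.1 ≠ p.2 ∧ ∀ i ∈ E,
            match i with
            | Sum.inl a => (((p.2 a : ℤ) - (p.1 a : ℤ)) : ZMod (n₁ a)) = halfElt (n₁ a)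
            | Sum.inr b =>
                (((φ p.2 b : ℤ) - (φ p.1 b : ℤ)) : ZMod (n₂ b)) = halfElt (n₂ b))).card)
      * ∏ i ∈ E, Sum.elim n₁ n₂ i = N ^ 2 := by
  rcases hEblock with hinl | hinr
  · obtain ⟨S, -, rfl⟩ := (subset_map_iff (f := .inl)).mp fun i hi =>
      (hinl i hi).elim fun a ha => mem_map.mpr ⟨a, mem_univ a, (ha.symm : Sum.inl a = i)⟩
    simp only [forall_mem_map, prod_map, Function.Embedding.inl_apply, Sum.elim_inl]
    rw [← h₁]
    convert card_filter_ne_and_sub_eq_mul_prod n₁ S (map_nonempty.mp hE) _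
      fun a _ => halfElt_ne_zero (hn₁ a)
  · obtain ⟨S, -, rfl⟩ := (subset_map_iff (f := .inr)).mp fun i hi =>
      (hinr i hi).elim fun b hb => mem_map.mpr ⟨b, mem_univ b, (hb.symm : Sum.inr b = i)⟩
    simp only [forall_mem_map, prod_map, Function.Embedding.inr_apply, Sum.elim_inr]
    rw [← h₂, ← card_filter_ne_and_sub_eq_mul_prod n₂ S (map_nonempty.mp hE) _
      fun b _ => halfElt_ne_zero (hn₂ b)]
    congr 1
    simp_rw [← φ.injective.ne_iff]
    convert card_filter_prod_map_equiv φ fun q => q.1 ≠ q.2 ∧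
      ∀ b ∈ S, (((q.2 b : ℤ) - (q.1 b : ℤ)) : ZMod (n₂ b)) = halfElt (n₂ b)
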